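/- arXiv:1109.3132 — 2 statements merged into one kernel-verified Lean document; each statement's English description precedes it below -/
import Mathlib

section
/- Let q : [a,b] → ℝ be nonnegative and integrable and let u be a nonconstant solution of u'' = qu (a.e., with u' absolutely continuous) on [a,b] with 0 ≤ u(a) ≤ 1 and 0 ≤ u(b) ≤ 1. Then 0 < u(x) < 1 for all x ∈ (a,b). -/
open MeasureTheory intervalIntegral Set Filter Topology

private lemma le_limit_Ico {f : ℝ → ℝ} {p r : ℝ} (hpr : p < r)
    (hc : ContinuousWithinAt f (Set.Icc p r) r)
    (h : ∀ x ∈ Set.Ico p r, f x ≤ 0) : f r ≤ 0 := by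
  have hne : (𝓝[Set.Ico p r] r).NeBot := by
    apply mem_closure_iff_nhdsWithin_neBot.mp
    rw [closure_Ico hpr.ne]
    exact ⟨hpr.le, le_refl r⟩
  have ht : Filter.Tendsto f (𝓝[Set.Ico p r] r) (𝓝 (f r)) :=
    hc.mono Set.Ico_subset_Icc_self
  exact le_of_tendsto ht (eventually_nhdsWithin_of_forall h)

private lemma le_limit_Ioc {f : ℝ → ℝ} {p r : ℝ} (hpr : p < r)
    (hc : ContinuousWithinAt f (Set.Icc p r) p)
    (h : ∀ x ∈ Set.Ioc p r, f x ≤ 0) : f p ≤ 0 := by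
  have hne : (𝓝[Set.Ioc p r] p).NeBot := by
    apply mem_closure_iff_nhdsWithin_neBot.mp
    rw [closure_Ioc hpr.ne]
    exact ⟨le_refl p, hpr.le⟩
  have ht : Filter.Tendsto f (𝓝[Set.Ioc p r] p) (𝓝 (f p)) :=
    hc.mono Set.Ioc_subset_Icc_self
  exact le_of_tendsto ht (eventually_nhdsWithin_of_forall h)

private lemma gronA {q u u' : ℝ → ℝ} {c d : ℝ} (hcd : c ≤ d)
    (hq : ∀ x ∈ Set.Icc c d, 0 ≤ q x)
    (hqint : IntervalIntegrable q volume c d)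
    (hu'int : IntervalIntegrable u' volume c d)
    (hquint : IntervalIntegrable (fun t => q t * u t) volume c d)
    (hu : ∀ x ∈ Set.Icc c d, u x = ∫ t in c..x, u' t)
    (hu' : ∀ x ∈ Set.Icc c d, u' x = ∫ t in c..x, q t * u t)
    (hupos : ∀ x ∈ Set.Icc c d, 0 ≤ u x)
    (hucont : ContinuousOn u (Set.Icc c d))
    (hsmall : (d - c) * (∫ t in c..d, q t) < 1) :
    ∀ x ∈ Set.Icc c d, u x = 0 := by
  obtain ⟨x₀, hx₀, hmax⟩ := isCompact_Icc.exists_isMaxOn (Set.nonempty_Icc.2 hcd) hucont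
  set M := u x₀ with hM
  have hM0 : 0 ≤ M := hupos x₀ hx₀
  set Qd := ∫ t in c..d, q t with hQd
  have hQd0 : 0 ≤ Qd := intervalIntegral.integral_nonneg hcd hq
  have hsubI : ∀ {x y : ℝ}, x ∈ Set.Icc c d → y ∈ Set.Icc c d →
      Set.uIcc x y ⊆ Set.uIcc c d := by
    intro x y hx hy
    apply Set.uIcc_subset_uIcc <;> rw [Set.uIcc_of_le hcd] <;> assumption
  have hcmem : c ∈ Set.Icc c d := ⟨le_refl c, hcd⟩
  -- bound on u'
  have hbound : ∀ t ∈ Set.Icc c d, u' t ≤ M * Qd := by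
    intro t ht
    rw [hu' t ht]
    have h1 : (∫ s in c..t, q s * u s) ≤ ∫ s in c..t, q s * M := by
      apply intervalIntegral.integral_mono_on ht.1
        (hquint.mono_set (hsubI hcmem ht))
        ((hqint.mono_set (hsubI hcmem ht)).mul_const M)
      intro s hs
      have hs' : s ∈ Set.Icc c d := ⟨hs.1, hs.2.trans ht.2⟩
      exact mul_le_mul_of_nonneg_left (hmax hs') (hq s hs')
    have h2 : (∫ s in c..t, q s * M) = (∫ s in c..t, q s) * M := by
      rw [intervalIntegral.integral_mul_const]
    have h3 : (∫ s in c..t, q s) ≤ Qd := by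
      rw [hQd, ← intervalIntegral.integral_add_adjacent_intervals
        (hqint.mono_set (hsubI hcmem ht)) (hqint.mono_set (hsubI ht ⟨hcd, le_refl d⟩))]
      have : 0 ≤ ∫ s in t..d, q s :=
        intervalIntegral.integral_nonneg ht.2 (fun s hs => hq s ⟨ht.1.trans hs.1, hs.2⟩)
      linarith
    calc (∫ s in c..t, q s * u s) ≤ (∫ s in c..t, q s) * M := by rw [← h2]; exact h1
      _ ≤ Qd * M := mul_le_mul_of_nonneg_right h3 hM0
      _ = M * Qd := mul_comm _ _
  -- M satisfies M ≤ (d - c) * Qd * M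
  have hMle : M ≤ (d - c) * (M * Qd) := by
    have h1 : M = ∫ t in c..x₀, u' t := hu x₀ hx₀
    have h2 : (∫ t in c..x₀, u' t) ≤ ∫ t in c..x₀, M * Qd := by
      apply intervalIntegral.integral_mono_on hx₀.1
        (hu'int.mono_set (hsubI hcmem hx₀)) intervalIntegrable_const
      intro s hs
      exact hbound s ⟨hs.1, hs.2.trans hx₀.2⟩
    have h3 : (∫ t in c..x₀, M * Qd) = (x₀ - c) * (M * Qd) := by
      rw [intervalIntegral.integral_const]
      simp only [smul_eq_mul]
    have h4 : (x₀ - c) * (M * Qd) ≤ (d - c) * (M * Qd) := by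
      apply mul_le_mul_of_nonneg_right _ (mul_nonneg hM0 hQd0)
      linarith [hx₀.2]
    linarith [h1, h2, h3, h4]
  have hMzero : M = 0 := by
    rcases lt_or_eq_of_le hM0 with h | h
    · exfalso
      have : (d - c) * (M * Qd) = ((d - c) * Qd) * M := by ring
      rw [this] at hMle
      nlinarith
    · exact h.symm
  intro x hx
  exact le_antisymm (hMzero ▸ hmax hx) (hupos x hx)

private lemma gronB {q u u' : ℝ → ℝ} {c b : ℝ} (hcb : c ≤ b)
    (hq : ∀ x ∈ Set.Icc c b, 0 ≤ q x)
    (hqint : IntervalIntegrable q volume c b)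
    (hu'int : IntervalIntegrable u' volume c b)
    (hquint : IntervalIntegrable (fun t => q t * u t) volume c b)
    (hu : ∀ x ∈ Set.Icc c b, u x = ∫ t in c..x, u' t)
    (hu' : ∀ x ∈ Set.Icc c b, u' x = ∫ t in c..x, q t * u t)
    (hupos : ∀ x ∈ Set.Icc c b, 0 ≤ u x)
    (hucont : ContinuousOn u (Set.Icc c b)) :
    ∀ x ∈ Set.Icc c b, u x = 0 := by
  have hsubI : ∀ {x y : ℝ}, x ∈ Set.Icc c b → y ∈ Set.Icc c b →
      Set.uIcc x y ⊆ Set.uIcc c b := by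
    intro x y hx hy
    apply Set.uIcc_subset_uIcc <;> rw [Set.uIcc_of_le hcb] <;> assumption
  have hcmem : c ∈ Set.Icc c b := ⟨le_refl c, hcb⟩
  have hbmem : b ∈ Set.Icc c b := ⟨hcb, le_refl b⟩
  set S : Set ℝ := {x | x ∈ Set.Icc c b ∧ ∀ t ∈ Set.Icc c x, u t = 0} with hS
  have hucz : u c = 0 := by
    rw [hu c hcmem, intervalIntegral.integral_same]
  have hcS : c ∈ S := by
    refine ⟨hcmem, fun t ht => ?_⟩
    have : t = c := le_antisymm ht.2 ht.1
    rw [this]; exact hucz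
  have hbdd : BddAbove S := ⟨b, fun x hx => hx.1.2⟩
  set s := sSup S with hs
  have hcs : c ≤ s := le_csSup hbdd hcS
  have hsb : s ≤ b := csSup_le ⟨c, hcS⟩ (fun x hx => hx.1.2)
  have hsmem : s ∈ Set.Icc c b := ⟨hcs, hsb⟩
  have hzeroIco : ∀ t ∈ Set.Ico c s, u t = 0 := by
    intro t ht
    obtain ⟨x, hxS, htx⟩ := exists_lt_of_lt_csSup ⟨c, hcS⟩ ht.2
    exact hxS.2 t ⟨ht.1, htx.le⟩
  have hzeroIcc : ∀ t ∈ Set.Icc c s, u t = 0 := by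
    intro t ht
    rcases lt_or_eq_of_le ht.2 with h | h
    · exact hzeroIco t ⟨ht.1, h⟩
    · rcases lt_or_eq_of_le hcs with hlt | he
      · rw [h]
        refine le_antisymm ?_ (hupos s hsmem)
        apply le_limit_Ico hlt ((hucont s hsmem).mono ?_)
        · intro x hx; exact le_of_eq (hzeroIco x hx)
        · exact fun x hx => ⟨hx.1, hx.2.trans hsb⟩
      · rw [h, ← he]; exact hucz
  have hsS : s ∈ S := ⟨hsmem, hzeroIcc⟩
  -- s must equal b
  have hsb' : s = b := by
    by_contra hne
    have hslt : s < b := lt_of_le_of_ne hsb hne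
    have hu's : u' s = 0 := by
      rw [hu' s hsmem]
      rw [intervalIntegral.integral_congr (g := fun _ => (0:ℝ)) ?_]
      · exact intervalIntegral.integral_zero
      · intro t ht
        rw [Set.uIcc_of_le hcs] at ht
        simp [hzeroIcc t ht]
    set K := (∫ t in c..b, q t) + 1 with hK
    have hKpos : 0 < K := by
      have h0 : 0 ≤ ∫ t in c..b, q t := intervalIntegral.integral_nonneg (μ := volume) hcb hq
      linarith
    set d := min b (s + (2*K)⁻¹) with hd
    have hKinv : 0 < (2*K)⁻¹ := by positivity
    have hsd : s < d := lt_min hslt (by linarith)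
    have hdb : d ≤ b := min_le_left _ _
    have hdmem : d ∈ Set.Icc c b := ⟨hcs.trans hsd.le, hdb⟩
    have hds : d - s ≤ (2*K)⁻¹ := by
      have : d ≤ s + (2*K)⁻¹ := min_le_right _ _
      linarith
    -- integral identities based at s
    have hu_s : ∀ x ∈ Set.Icc s d, u x = ∫ t in s..x, u' t := by
      intro x hx
      have hxm : x ∈ Set.Icc c b := ⟨hcs.trans hx.1, hx.2.trans hdb⟩
      have hadd := intervalIntegral.integral_add_adjacent_intervals
        (hu'int.mono_set (hsubI hcmem hsmem)) (hu'int.mono_set (hsubI hsmem hxm))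
      have h1 : (∫ t in c..s, u' t) = u s := (hu s hsmem).symm
      have h2 : u s = 0 := hzeroIcc s ⟨hcs, le_refl s⟩
      rw [hu x hxm, ← hadd, h1, h2, zero_add]
    have hu'_s : ∀ x ∈ Set.Icc s d, u' x = ∫ t in s..x, q t * u t := by
      intro x hx
      have hxm : x ∈ Set.Icc c b := ⟨hcs.trans hx.1, hx.2.trans hdb⟩
      have hadd := intervalIntegral.integral_add_adjacent_intervals
        (hquint.mono_set (hsubI hcmem hsmem)) (hquint.mono_set (hsubI hsmem hxm))
      have h1 : (∫ t in c..s, q t * u t) = u' s := (hu' s hsmem).symm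
      rw [hu' x hxm, ← hadd, h1, hu's, zero_add]
    have hsubm : Set.Icc s d ⊆ Set.Icc c b := fun x hx => ⟨hcs.trans hx.1, hx.2.trans hdb⟩
    -- smallness
    have hqsd : (∫ t in s..d, q t) ≤ K := by
      have e1 := intervalIntegral.integral_add_adjacent_intervals
        (hqint.mono_set (hsubI hcmem hsmem)) (hqint.mono_set (hsubI hsmem hdmem))
      have e2 := intervalIntegral.integral_add_adjacent_intervals
        ((hqint.mono_set (hsubI hcmem hsmem)).trans (hqint.mono_set (hsubI hsmem hdmem)))
        (hqint.mono_set (hsubI hdmem hbmem))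
      have n1 : 0 ≤ ∫ t in c..s, q t :=
        intervalIntegral.integral_nonneg hcs (fun t ht => hq t ⟨ht.1, ht.2.trans hsb⟩)
      have n3 : 0 ≤ ∫ t in d..b, q t :=
        intervalIntegral.integral_nonneg hdb (fun t ht => hq t ⟨hdmem.1.trans ht.1, ht.2⟩)
      rw [hK]
      linarith
    have hqsd0 : 0 ≤ ∫ t in s..d, q t :=
      intervalIntegral.integral_nonneg hsd.le (fun t ht => hq t (hsubm ht))
    have hsmall : (d - s) * (∫ t in s..d, q t) < 1 := by
      have h1 : (d - s) * (∫ t in s..d, q t) ≤ (2*K)⁻¹ * K := by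
        apply mul_le_mul hds hqsd hqsd0 (by positivity)
      have h2 : (2*K)⁻¹ * K = 1/2 := by
        field_simp
      linarith
    have hzd := gronA hsd.le (fun x hx => hq x (hsubm hx))
      (hqint.mono_set (hsubI hsmem hdmem)) (hu'int.mono_set (hsubI hsmem hdmem))
      (hquint.mono_set (hsubI hsmem hdmem)) hu_s hu'_s
      (fun x hx => hupos x (hsubm hx)) (hucont.mono hsubm) hsmall
    have hdS : d ∈ S := by
      refine ⟨hdmem, fun t ht => ?_⟩
      rcases le_total t s with h | h
      · exact hzeroIcc t ⟨ht.1, h⟩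
      · exact hzd t ⟨h, ht.2⟩
    have : d ≤ s := le_csSup hbdd hdS
    linarith
  intro x hx
  exact hzeroIcc x ⟨hx.1, hsb' ▸ hx.2⟩

/-- `u` is a Carathéodory solution of `u'' = q u` on `[a,b]`: `u` is the integral of `u'`,
and `u'` is absolutely continuous with a.e. derivative `q·u`, expressed via the
Lebesgue fundamental theorem of calculus. -/
def IsCaraSol (q u u' : ℝ → ℝ) (a b : ℝ) : Prop :=
  IntervalIntegrable u' volume a b ∧
  IntervalIntegrable (fun t => q t * u t) volume a b ∧
  (∀ x ∈ Set.Icc a b, u x = u a + ∫ t in a..x, u' t) ∧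
  (∀ x ∈ Set.Icc a b, u' x = u' a + ∫ t in a..x, q t * u t)

/-- Maximum principle bounds: a nonconstant solution of `u'' = q u` with boundary
values in `[0,1]` satisfies `0 < u < 1` in the interior. -/
theorem stmt_3 (a b : ℝ) (hab : a < b) (q u u' : ℝ → ℝ)
    (hq : ∀ x ∈ Set.Icc a b, 0 ≤ q x)
    (hqint : IntervalIntegrable q volume a b)
    (hsol : IsCaraSol q u u' a b)
    (hnonconst : ∃ x ∈ Set.Icc a b, ∃ y ∈ Set.Icc a b, u x ≠ u y)
    (ha0 : 0 ≤ u a) (ha1 : u a ≤ 1) (hb0 : 0 ≤ u b) (hb1 : u b ≤ 1) :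
    ∀ x ∈ Set.Ioo a b, 0 < u x ∧ u x < 1 := by
  obtain ⟨hu'int, hquint, hu, hu'⟩ := hsol
  have hab' : a ≤ b := hab.le
  have huicc : Set.uIcc a b = Set.Icc a b := Set.uIcc_of_le hab'
  have hamem : a ∈ Set.Icc a b := ⟨le_refl a, hab'⟩
  have hbmem : b ∈ Set.Icc a b := ⟨hab', le_refl b⟩
  have hsubI : ∀ {x y : ℝ}, x ∈ Set.Icc a b → y ∈ Set.Icc a b →
      Set.uIcc x y ⊆ Set.uIcc a b := by
    intro x y hx hy
    apply Set.uIcc_subset_uIcc <;> rw [huicc] <;> assumption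
  -- continuity of u and u'
  have hucont : ContinuousOn u (Set.Icc a b) := by
    have h1 : ContinuousOn (fun x => u a + ∫ t in a..x, u' t) (Set.Icc a b) := by
      apply continuousOn_const.add
      have := intervalIntegral.continuousOn_primitive_interval' hu'int Set.left_mem_uIcc
      rwa [huicc] at this
    exact h1.congr hu
  have hu'cont : ContinuousOn u' (Set.Icc a b) := by
    have h1 : ContinuousOn (fun x => u' a + ∫ t in a..x, q t * u t) (Set.Icc a b) := by
      apply continuousOn_const.add
      have := intervalIntegral.continuousOn_primitive_interval' hquint Set.left_mem_uIcc
      rwa [huicc] at this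
    exact h1.congr hu'
  -- difference formulas
  have hdu : ∀ x ∈ Set.Icc a b, ∀ y ∈ Set.Icc a b, u y - u x = ∫ t in x..y, u' t := by
    intro x hx y hy
    have hadd := intervalIntegral.integral_add_adjacent_intervals
      (hu'int.mono_set (hsubI hamem hx)) (hu'int.mono_set (hsubI hx hy))
    have hax : (∫ t in a..x, u' t) = u x - u a := by rw [hu x hx]; ring
    have hay : (∫ t in a..y, u' t) = u y - u a := by rw [hu y hy]; ring
    rw [hax, hay] at hadd; linarith
  have hdu' : ∀ x ∈ Set.Icc a b, ∀ y ∈ Set.Icc a b, u' y - u' x = ∫ t in x..y, q t * u t := by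
    intro x hx y hy
    have hadd := intervalIntegral.integral_add_adjacent_intervals
      (hquint.mono_set (hsubI hamem hx)) (hquint.mono_set (hsubI hx hy))
    have hax : (∫ t in a..x, q t * u t) = u' x - u' a := by rw [hu' x hx]; ring
    have hay : (∫ t in a..y, q t * u t) = u' y - u' a := by rw [hu' y hy]; ring
    rw [hax, hay] at hadd; linarith
  -- nonnegativity of u
  have hnonneg : ∀ x ∈ Set.Icc a b, 0 ≤ u x := by
    by_contra hcon
    push_neg at hcon
    obtain ⟨z, hz, hz0⟩ := hcon
    obtain ⟨c, hcmem, hcmin⟩ := isCompact_Icc.exists_isMinOn (Set.nonempty_Icc.2 hab') hucont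
    have hc0 : u c < 0 := lt_of_le_of_lt (hcmin hz) hz0
    have hca : a < c := by
      rcases lt_or_eq_of_le hcmem.1 with h | h
      · exact h
      · exfalso; rw [← h] at hc0; linarith
    have hcb : c < b := by
      rcases lt_or_eq_of_le hcmem.2 with h | h
      · exact h
      · exfalso; rw [h] at hc0; linarith
    -- last nonnegative point before c
    have hAclosed : IsClosed (Set.Icc a c ∩ u ⁻¹' (Set.Ici 0)) :=
      (hucont.mono (Set.Icc_subset_Icc le_rfl hcmem.2)).preimage_isClosed_of_isClosed
        isClosed_Icc isClosed_Ici
    have haA : a ∈ Set.Icc a c ∩ u ⁻¹' (Set.Ici 0) := ⟨⟨le_refl a, hcmem.1⟩, ha0⟩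
    set α := sSup (Set.Icc a c ∩ u ⁻¹' (Set.Ici 0)) with hα
    have hαA : α ∈ Set.Icc a c ∩ u ⁻¹' (Set.Ici 0) :=
      hAclosed.csSup_mem ⟨a, haA⟩ ⟨c, fun x hx => hx.1.2⟩
    have hαIcc : α ∈ Set.Icc a b := ⟨hαA.1.1, hαA.1.2.trans hcmem.2⟩
    have hαc : α < c := by
      rcases lt_or_eq_of_le hαA.1.2 with h | h
      · exact h
      · exfalso; have h2 := hαA.2; rw [h] at h2; exact absurd h2 (not_le.2 hc0)
    have hnegA : ∀ x ∈ Set.Ioc α c, u x < 0 := by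
      intro x hx
      by_contra h
      push_neg at h
      have hxA : x ∈ Set.Icc a c ∩ u ⁻¹' (Set.Ici 0) :=
        ⟨⟨hαA.1.1.trans hx.1.le, hx.2⟩, h⟩
      exact absurd (le_csSup ⟨c, fun y hy => hy.1.2⟩ hxA) (not_le.2 hx.1)
    have hαz : u α = 0 := by
      refine le_antisymm ?_ hαA.2
      apply le_limit_Ioc hαc ((hucont α hαIcc).mono (Set.Icc_subset_Icc hαA.1.1 hcmem.2))
      exact fun x hx => (hnegA x hx).le
    -- first nonnegative point after c
    have hBclosed : IsClosed (Set.Icc c b ∩ u ⁻¹' (Set.Ici 0)) :=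
      (hucont.mono (Set.Icc_subset_Icc hcmem.1 le_rfl)).preimage_isClosed_of_isClosed
        isClosed_Icc isClosed_Ici
    have hbB : b ∈ Set.Icc c b ∩ u ⁻¹' (Set.Ici 0) := ⟨⟨hcmem.2, le_refl b⟩, hb0⟩
    set β := sInf (Set.Icc c b ∩ u ⁻¹' (Set.Ici 0)) with hβ
    have hβB : β ∈ Set.Icc c b ∩ u ⁻¹' (Set.Ici 0) :=
      hBclosed.csInf_mem ⟨b, hbB⟩ ⟨c, fun x hx => hx.1.1⟩
    have hβIcc : β ∈ Set.Icc a b := ⟨hcmem.1.trans hβB.1.1, hβB.1.2⟩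
    have hcβ : c < β := by
      rcases lt_or_eq_of_le hβB.1.1 with h | h
      · exact h
      · exfalso; have h2 := hβB.2; rw [← h] at h2; exact absurd h2 (not_le.2 hc0)
    have hnegB : ∀ x ∈ Set.Ico c β, u x < 0 := by
      intro x hx
      by_contra h
      push_neg at h
      have hxB : x ∈ Set.Icc c b ∩ u ⁻¹' (Set.Ici 0) :=
        ⟨⟨hx.1, hx.2.le.trans hβB.1.2⟩, h⟩
      exact absurd (csInf_le ⟨c, fun y hy => hy.1.1⟩ hxB) (not_le.2 hx.2)
    have hβz : u β = 0 := by
      refine le_antisymm ?_ hβB.2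
      apply le_limit_Ico hcβ ((hucont β hβIcc).mono (Set.Icc_subset_Icc hcmem.1 hβB.1.2))
      exact fun x hx => (hnegB x hx).le
    -- u ≤ 0 on [α, β]
    have hnp : ∀ t ∈ Set.Icc α β, u t ≤ 0 := by
      intro t ht
      rcases le_total t c with h | h
      · rcases lt_or_eq_of_le ht.1 with h1 | h1
        · exact (hnegA t ⟨h1, h⟩).le
        · rw [← h1]; exact le_of_eq hαz
      · rcases lt_or_eq_of_le ht.2 with h2 | h2
        · exact (hnegB t ⟨h, h2⟩).le
        · rw [h2]; exact le_of_eq hβz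
    -- u' comparisons around c
    have hwl : ∀ t ∈ Set.Icc α c, u' c ≤ u' t := by
      intro t ht
      have htm : t ∈ Set.Icc a b := ⟨hαA.1.1.trans ht.1, ht.2.trans hcmem.2⟩
      have hδ := hdu' t htm c hcmem
      have hptw : ∀ s ∈ Set.Icc t c, q s * u s ≤ (fun _ => (0:ℝ)) s := by
        intro s hs
        have hs1 : s ∈ Set.Icc a b := ⟨htm.1.trans hs.1, hs.2.trans hcmem.2⟩
        have h3 := mul_le_mul_of_nonneg_left
          (hnp s ⟨ht.1.trans hs.1, hs.2.trans hcβ.le⟩) (hq s hs1)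
        simpa using h3
      have hint := intervalIntegral.integral_mono_on ht.2
        (hquint.mono_set (hsubI htm hcmem)) intervalIntegrable_const hptw
      simp only [intervalIntegral.integral_const, smul_eq_mul, mul_zero] at hint
      linarith
    have hwr : ∀ t ∈ Set.Icc c β, u' t ≤ u' c := by
      intro t ht
      have htm : t ∈ Set.Icc a b := ⟨hcmem.1.trans ht.1, ht.2.trans hβIcc.2⟩
      have hδ := hdu' c hcmem t htm
      have hptw : ∀ s ∈ Set.Icc c t, q s * u s ≤ (fun _ => (0:ℝ)) s := by
        intro s hs
        have hs1 : s ∈ Set.Icc a b := ⟨hcmem.1.trans hs.1, hs.2.trans htm.2⟩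
        have h3 := mul_le_mul_of_nonneg_left
          (hnp s ⟨hαc.le.trans hs.1, hs.2.trans ht.2⟩) (hq s hs1)
        simpa using h3
      have hint := intervalIntegral.integral_mono_on ht.1
        (hquint.mono_set (hsubI hcmem htm)) intervalIntegrable_const hptw
      simp only [intervalIntegral.integral_const, smul_eq_mul, mul_zero] at hint
      linarith
    -- chord inequalities
    have hin1 : (c - α) * u' c ≤ u c - u α := by
      have h1 := hdu α hαIcc c hcmem
      have h2 : (∫ t in α..c, (fun _ => u' c) t) ≤ ∫ t in α..c, u' t :=
        intervalIntegral.integral_mono_on hαc.le intervalIntegrable_const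
          (hu'int.mono_set (hsubI hαIcc hcmem)) hwl
      rw [intervalIntegral.integral_const] at h2
      simp only [smul_eq_mul] at h2
      linarith
    have hin2 : u β - u c ≤ (β - c) * u' c := by
      have h1 := hdu c hcmem β hβIcc
      have h2 : (∫ t in c..β, u' t) ≤ ∫ t in c..β, (fun _ => u' c) t :=
        intervalIntegral.integral_mono_on hcβ.le (hu'int.mono_set (hsubI hcmem hβIcc))
          intervalIntegrable_const hwr
      rw [intervalIntegral.integral_const] at h2
      simp only [smul_eq_mul] at h2
      linarith
    have hwneg : u' c < 0 := by
      by_contra h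
      push_neg at h
      have h3 : 0 ≤ (c - α) * u' c := mul_nonneg (by linarith) h
      rw [hαz] at hin1
      linarith
    have h4 : (β - c) * u' c < 0 := mul_neg_of_pos_of_neg (by linarith) hwneg
    rw [hβz] at hin2
    linarith
  -- monotonicity of u'
  have hmono : ∀ x ∈ Set.Icc a b, ∀ y ∈ Set.Icc a b, x ≤ y → u' x ≤ u' y := by
    intro x hx y hy hxy
    have h1 := hdu' x hx y hy
    have h2 : 0 ≤ ∫ t in x..y, q t * u t := by
      apply intervalIntegral.integral_nonneg hxy
      intro s hs
      have hs1 : s ∈ Set.Icc a b := ⟨hx.1.trans hs.1, hs.2.trans hy.2⟩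
      exact mul_nonneg (hq s hs1) (hnonneg s hs1)
    linarith
  -- main goal
  intro c hc
  have hcmem : c ∈ Set.Icc a b := ⟨hc.1.le, hc.2.le⟩
  constructor
  · -- 0 < u c
    rcases lt_or_eq_of_le (hnonneg c hcmem) with h | h
    · exact h
    exfalso
    have hcz : u c = 0 := h.symm
    have hiccnb : Set.Icc a b ∈ 𝓝 c := Icc_mem_nhds hc.1 hc.2
    have hmeas : StronglyMeasurableAtFilter u' (𝓝 c) volume :=
      ContinuousOn.stronglyMeasurableAtFilter isOpen_Ioo
        (hu'cont.mono Set.Ioo_subset_Icc_self) c hc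
    have hcontAt : ContinuousAt u' c :=
      (hu'cont.mono Set.Ioo_subset_Icc_self).continuousAt (Ioo_mem_nhds hc.1 hc.2)
    have hd0 : HasDerivAt (fun x => ∫ t in a..x, u' t) (u' c) c :=
      intervalIntegral.integral_hasDerivAt_right
        (hu'int.mono_set (hsubI hamem hcmem)) hmeas hcontAt
    have hd1 : HasDerivAt (fun x => u a + ∫ t in a..x, u' t) (u' c) c := hd0.const_add (u a)
    have heq : u =ᶠ[𝓝 c] (fun x => u a + ∫ t in a..x, u' t) :=
      Filter.eventuallyEq_of_mem hiccnb (fun x hx => hu x hx)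
    have hd : HasDerivAt u (u' c) c := hd1.congr_of_eventuallyEq heq
    have hlocmin : IsLocalMin u c :=
      Filter.eventually_of_mem hiccnb (fun x hx => hcz ▸ hnonneg x hx)
    have hwz : u' c = 0 := hlocmin.hasDerivAt_eq_zero hd
    -- u vanishes on [c, b]
    have hIccR : Set.Icc c b ⊆ Set.Icc a b := Set.Icc_subset_Icc hc.1.le le_rfl
    have hzright : ∀ x ∈ Set.Icc c b, u x = 0 := by
      refine gronB hc.2.le (fun x hx => hq x (hIccR hx))
        (hqint.mono_set (hsubI hcmem hbmem)) (hu'int.mono_set (hsubI hcmem hbmem))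
        (hquint.mono_set (hsubI hcmem hbmem)) ?_ ?_
        (fun x hx => hnonneg x (hIccR hx)) (hucont.mono hIccR)
      · intro x hx
        have h5 := hdu c hcmem x (hIccR hx)
        rw [hcz] at h5; linarith
      · intro x hx
        have h5 := hdu' c hcmem x (hIccR hx)
        rw [hwz] at h5; linarith
    -- u vanishes on [a, c] via reflection
    have hrefl_b : c ≤ 2*c - a := by linarith [hc.1]
    have hmapsto : ∀ x ∈ Set.Icc c (2*c - a), (2*c - x) ∈ Set.Icc a c := by
      intro x hx
      exact ⟨by linarith [hx.2], by linarith [hx.1]⟩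
    have hIccL : Set.Icc a c ⊆ Set.Icc a b := Set.Icc_subset_Icc le_rfl hc.2.le
    have h2c : 2*c - c = c := by ring
    have hqint' : IntervalIntegrable (fun x => q (2*c - x)) volume c (2*c - a) := by
      have h5 := (hqint.mono_set (hsubI hamem hcmem)).comp_sub_left (2*c)
      rw [h2c] at h5
      exact h5.symm
    have hu'int' : IntervalIntegrable (fun x => u' (2*c - x)) volume c (2*c - a) := by
      have h5 := (hu'int.mono_set (hsubI hamem hcmem)).comp_sub_left (2*c)
      rw [h2c] at h5
      exact h5.symm
    have hquint' : IntervalIntegrable (fun x => q (2*c - x) * u (2*c - x))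
        volume c (2*c - a) := by
      have h5 := (hquint.mono_set (hsubI hamem hcmem)).comp_sub_left (2*c)
      rw [h2c] at h5
      exact h5.symm
    have hzleft0 : ∀ x ∈ Set.Icc c (2*c - a), u (2*c - x) = 0 := by
      refine gronB (q := fun x => q (2*c - x)) (u := fun x => u (2*c - x))
        (u' := fun x => -u' (2*c - x)) hrefl_b
        (fun x hx => hq _ (hIccL (hmapsto x hx))) hqint' hu'int'.neg hquint' ?_ ?_
        (fun x hx => hnonneg _ (hIccL (hmapsto x hx))) ?_
      · intro x hx
        have hxm : (2*c - x) ∈ Set.Icc a b := hIccL (hmapsto x hx)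
        have h1 := hdu c hcmem (2*c - x) hxm
        have h2 : (∫ t in c..x, u' (2*c - t)) = ∫ t in (2*c - x)..(2*c - c), u' t :=
          intervalIntegral.integral_comp_sub_left u' (2*c)
        rw [h2c] at h2
        have h4 : (∫ t in c..x, -u' (2*c - t)) = ∫ t in c..(2*c - x), u' t := by
          rw [intervalIntegral.integral_neg, h2, ← intervalIntegral.integral_symm]
        show u (2*c - x) = ∫ t in c..x, -u' (2*c - t)
        rw [h4]
        linarith [h1, hcz]
      · intro x hx
        have hxm : (2*c - x) ∈ Set.Icc a b := hIccL (hmapsto x hx)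
        have h1 := hdu' c hcmem (2*c - x) hxm
        have h2 : (∫ t in c..x, q (2*c - t) * u (2*c - t))
            = ∫ t in (2*c - x)..(2*c - c), q t * u t :=
          intervalIntegral.integral_comp_sub_left (fun t => q t * u t) (2*c)
        rw [h2c] at h2
        show -u' (2*c - x) = ∫ t in c..x, q (2*c - t) * u (2*c - t)
        rw [h2, intervalIntegral.integral_symm]
        linarith [h1, hwz]
      · exact (hucont.mono hIccL).comp
          ((continuous_const.sub continuous_id).continuousOn) hmapsto
    have hzleft : ∀ x ∈ Set.Icc a c, u x = 0 := by
      intro x hx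
      have h1 : (2*c - x) ∈ Set.Icc c (2*c - a) := ⟨by linarith [hx.2], by linarith [hx.1]⟩
      have h2 : u (2*c - (2*c - x)) = 0 := hzleft0 (2*c - x) h1
      rwa [show 2*c - (2*c - x) = x by ring] at h2
    obtain ⟨x, hx, y, hy, hne⟩ := hnonconst
    have hz : ∀ z ∈ Set.Icc a b, u z = 0 := by
      intro z hzm
      rcases le_total z c with h5 | h5
      · exact hzleft z ⟨hzm.1, h5⟩
      · exact hzright z ⟨h5, hzm.2⟩
    exact hne (by rw [hz x hx, hz y hy])
  · -- u c < 1
    by_contra h1c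
    push_neg at h1c
    have hwl2 : ∀ t ∈ Set.Icc a c, u' t ≤ u' c :=
      fun t ht => hmono t ⟨ht.1, ht.2.trans hc.2.le⟩ c hcmem ht.2
    have hwr2 : ∀ t ∈ Set.Icc c b, u' c ≤ u' t :=
      fun t ht => hmono c hcmem t ⟨hc.1.le.trans ht.1, ht.2⟩ ht.1
    have e1 : u c - u a ≤ (c - a) * u' c := by
      have h1 := hdu a hamem c hcmem
      have h2 : (∫ t in a..c, u' t) ≤ ∫ t in a..c, (fun _ => u' c) t :=
        intervalIntegral.integral_mono_on hc.1.le (hu'int.mono_set (hsubI hamem hcmem))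
          intervalIntegrable_const hwl2
      rw [intervalIntegral.integral_const] at h2
      simp only [smul_eq_mul] at h2
      linarith
    have e2 : (b - c) * u' c ≤ u b - u c := by
      have h1 := hdu c hcmem b hbmem
      have h2 : (∫ t in c..b, (fun _ => u' c) t) ≤ ∫ t in c..b, u' t :=
        intervalIntegral.integral_mono_on hc.2.le intervalIntegrable_const
          (hu'int.mono_set (hsubI hcmem hbmem)) hwr2
      rw [intervalIntegral.integral_const] at h2
      simp only [smul_eq_mul] at h2
      linarith
    have hw0 : u' c = 0 := by
      have hge : 0 ≤ u' c := by
        by_contra hlt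
        push_neg at hlt
        have h3 : (c - a) * u' c < 0 := mul_neg_of_pos_of_neg (by linarith [hc.1]) hlt
        linarith
      have hle : u' c ≤ 0 := by
        by_contra hlt
        push_neg at hlt
        have h3 : 0 < (b - c) * u' c := mul_pos (by linarith [hc.2]) hlt
        linarith
      linarith
    rw [hw0, mul_zero] at e1 e2
    have hua : u a = 1 := by linarith
    have huc : u c = 1 := by linarith
    have hub : u b = 1 := by linarith
    have huconst : ∀ x ∈ Set.Icc a b, u x = 1 := by
      intro x hx
      rcases le_total x c with h | h
      · have f1 := hdu a hamem x hx
        have f2 := hdu x hx c hcmem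
        have g1 : (∫ t in a..x, u' t) ≤ 0 := by
          have h2 : (∫ t in a..x, u' t) ≤ ∫ t in a..x, (fun _ => u' c) t :=
            intervalIntegral.integral_mono_on hx.1 (hu'int.mono_set (hsubI hamem hx))
              intervalIntegrable_const (fun t ht => hwl2 t ⟨ht.1, ht.2.trans h⟩)
          rw [intervalIntegral.integral_const] at h2
          simp only [smul_eq_mul, hw0, mul_zero] at h2
          exact h2
        have g2 : (∫ t in x..c, u' t) ≤ 0 := by
          have h2 : (∫ t in x..c, u' t) ≤ ∫ t in x..c, (fun _ => u' c) t :=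
            intervalIntegral.integral_mono_on h (hu'int.mono_set (hsubI hx hcmem))
              intervalIntegrable_const (fun t ht => hwl2 t ⟨hx.1.trans ht.1, ht.2⟩)
          rw [intervalIntegral.integral_const] at h2
          simp only [smul_eq_mul, hw0, mul_zero] at h2
          exact h2
        linarith
      · have f1 := hdu c hcmem x hx
        have f2 := hdu x hx b hbmem
        have g1 : 0 ≤ (∫ t in c..x, u' t) := by
          have h2 : (∫ t in c..x, (fun _ => u' c) t) ≤ ∫ t in c..x, u' t :=
            intervalIntegral.integral_mono_on h intervalIntegrable_const
              (hu'int.mono_set (hsubI hcmem hx)) (fun t ht => hwr2 t ⟨ht.1, ht.2.trans hx.2⟩)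
          rw [intervalIntegral.integral_const] at h2
          simp only [smul_eq_mul, hw0, mul_zero] at h2
          exact h2
        have g2 : 0 ≤ (∫ t in x..b, u' t) := by
          have h2 : (∫ t in x..b, (fun _ => u' c) t) ≤ ∫ t in x..b, u' t :=
            intervalIntegral.integral_mono_on hx.2 intervalIntegrable_const
              (hu'int.mono_set (hsubI hx hbmem)) (fun t ht => hwr2 t ⟨h.trans ht.1, ht.2⟩)
          rw [intervalIntegral.integral_const] at h2
          simp only [smul_eq_mul, hw0, mul_zero] at h2
          exact h2
        linarith
    obtain ⟨x, hx, y, hy, hne⟩ := hnonconst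
    exact hne (by rw [huconst x hx, huconst y hy])
end

section
/- Let q : [0,L] → ℝ be nonnegative and integrable, and let u satisfy u'' = qu a.e. on [0,L] with u' absolutely continuous, u(0) = 0, u(L) = 1. Then u'(L) > 0. -/
open MeasureTheory intervalIntegral

/-- A solution of `u'' = q u` on `[0,L]` with `u(0) = 0`, `u(L) = 1` has strictly
positive outward derivative at `L`. -/
theorem stmt_14 (L : ℝ) (hL : 0 < L) (q u u' : ℝ → ℝ)
    (hq : ∀ x ∈ Set.Icc (0:ℝ) L, 0 ≤ q x)
    (hqint : IntervalIntegrable q MeasureTheory.volume 0 L)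
    (hsol : IsCaraSol q u u' 0 L)
    (h0 : u 0 = 0) (hL1 : u L = 1) :
    0 < u' L := by
  obtain ⟨hint', hintqu, hu, hu'⟩ := hsol
  have hIcc : Set.uIcc (0:ℝ) L = Set.Icc 0 L := Set.uIcc_of_le hL.le
  -- continuity of u on [0,L]
  have hcont : ContinuousOn u (Set.Icc 0 L) := by
    refine ContinuousOn.congr (continuousOn_const.add ?_) (fun x hx => hu x hx)
    have h2 : IntegrableOn u' (Set.uIcc 0 L) volume := by
      rw [hIcc]; exact (intervalIntegrable_iff_integrableOn_Icc_of_le hL.le).mp hint'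
    simpa [hIcc] using intervalIntegral.continuousOn_primitive_interval h2
  -- the set where u ≤ 0
  set S : Set ℝ := Set.Icc 0 L ∩ u ⁻¹' Set.Iic 0 with hS
  have hS0 : (0:ℝ) ∈ S := ⟨⟨le_refl _, hL.le⟩, by simp [h0]⟩
  have hSbdd : BddAbove S := ⟨L, fun x hx => hx.1.2⟩
  have hSclosed : IsClosed S :=
    hcont.preimage_isClosed_of_isClosed isClosed_Icc isClosed_Iic
  set c : ℝ := sSup S with hc
  have hcS : c ∈ S := hSclosed.csSup_mem ⟨0, hS0⟩ hSbdd
  have hc0 : 0 ≤ c := hcS.1.1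
  have hcL : c ≤ L := hcS.1.2
  have huc : u c ≤ 0 := hcS.2
  have hcltL : c < L := lt_of_le_of_ne hcL (by
    intro h; rw [h] at huc; rw [hL1] at huc; linarith)
  -- u > 0 on (c, L]
  have hupos : ∀ t ∈ Set.Ioc c L, 0 < u t := by
    intro t ht
    by_contra h
    push_neg at h
    have : t ∈ S := ⟨⟨hc0.trans ht.1.le, ht.2⟩, h⟩
    exact absurd (le_csSup hSbdd this) (not_le.mpr ht.1)
  -- integrability on subintervals
  have hsub : ∀ x ∈ Set.Icc c L, IntervalIntegrable (fun t => q t * u t) volume x L := by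
    intro x hx
    refine hintqu.mono_set ?_
    rw [hIcc, Set.uIcc_of_le hx.2]
    exact Set.Icc_subset_Icc (hc0.trans hx.1) le_rfl
  -- u'(x) ≤ u'(L) for x ∈ [c, L]
  have hmono : ∀ x ∈ Set.Icc c L, u' x ≤ u' L := by
    intro x hx
    have hx0L : x ∈ Set.Icc 0 L := ⟨hc0.trans hx.1, hx.2⟩
    have hadd : (∫ t in (0:ℝ)..x, q t * u t) + ∫ t in x..L, q t * u t
        = ∫ t in (0:ℝ)..L, q t * u t :=
      intervalIntegral.integral_add_adjacent_intervals
        (hintqu.mono_set (by rw [hIcc, Set.uIcc_of_le hx0L.1]; exact Set.Icc_subset_Icc le_rfl hx.2))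
        (hsub x hx)
    have hrep : u' L = u' x + ∫ t in x..L, q t * u t := by
      rw [hu' L ⟨le_refl _ |>.trans hL.le, le_refl _⟩, hu' x hx0L]
      · ring_nf
        linarith [hadd]
    have hnn : 0 ≤ ∫ t in x..L, q t * u t := by
      refine intervalIntegral.integral_nonneg_of_ae_restrict hx.2 ?_
      have hcnull : (volume : Measure ℝ) {c} = 0 := measure_singleton c
      have hne : ∀ᵐ t ∂(volume : Measure ℝ), t ≠ c := by
        filter_upwards [measure_eq_zero_iff_ae_notMem.mp hcnull] with t ht
        simpa using ht
      rw [Filter.EventuallyLE, ae_restrict_iff' measurableSet_Icc]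
      filter_upwards [hne] with t htne htmem
      have htc : c < t := lt_of_le_of_ne (hx.1.trans htmem.1) (Ne.symm htne)
      exact mul_nonneg (hq t ⟨hc0.trans htc.le, htmem.2⟩)
        (hupos t ⟨htc, htmem.2⟩).le
    linarith [hrep, hnn]
  -- integral bound
  have hintL : (∫ t in c..L, u' t) ≤ (L - c) * u' L := by
    have := intervalIntegral.integral_mono_on (μ := volume) (a := c) (b := L)
      (f := u') (g := fun _ => u' L) hcL
      (hint'.mono_set (by rw [hIcc, Set.uIcc_of_le hcL]; exact Set.Icc_subset_Icc hc0 le_rfl))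
      intervalIntegrable_const hmono
    simpa [smul_eq_mul] using this
  have hval : (∫ t in c..L, u' t) = u L - u c := by
    have hadd : (∫ t in (0:ℝ)..c, u' t) + ∫ t in c..L, u' t = ∫ t in (0:ℝ)..L, u' t :=
      intervalIntegral.integral_add_adjacent_intervals
        (hint'.mono_set (by rw [hIcc, Set.uIcc_of_le hc0]; exact Set.Icc_subset_Icc le_rfl hcL))
        (hint'.mono_set (by rw [hIcc, Set.uIcc_of_le hcL]; exact Set.Icc_subset_Icc hc0 le_rfl))
    have h1 := hu c ⟨hc0, hcL⟩
    have h2 := hu L ⟨hL.le, le_refl _⟩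
    linarith [hadd]
  have : (1:ℝ) ≤ (L - c) * u' L := by
    rw [hval, hL1] at hintL; linarith
  nlinarith [sub_pos.mpr hcltL]
end
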